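/- The number of code words of length k is the Fibonacci number F_{2k-1}, where F_1 = F_2 = 1. -/
import Mathlib

/-- A code word is a nonempty list of symbols, each either `R` (modelled as `none`) or
`V_j` (modelled as `some j`): the first symbol is `R`, and for `j ≥ 2` the `j`-th symbol
(1-indexed) is `R`, `V_j`, or equal to the `(j-1)`-st symbol. -/
def IsCodeWord (w : List (Option ℕ)) : Prop :=
  w ≠ [] ∧ w.head? = some none ∧
    ∀ j, 2 ≤ j → j ≤ w.length →
      w[j - 1]! = none ∨ w[j - 1]! = some j ∨ w[j - 1]! = w[j - 2]!


namespace CodeWordAux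

lemma getE_append_lt (w : List (Option ℕ)) (x : Option ℕ) {i : ℕ} (h : i < w.length) :
    (w ++ [x])[i]! = w[i]! := by
  rw [getElem!_pos w i h, getElem!_pos (w ++ [x]) i (by simp; omega),
    List.getElem_append_left h]

lemma getE_append_last (w : List (Option ℕ)) (x : Option ℕ) :
    (w ++ [x])[w.length]! = x := by
  rw [getElem!_pos (w ++ [x]) w.length (by simp)]
  simp

lemma head?_append' (w : List (Option ℕ)) (hw : w ≠ []) (x : Option ℕ) :
    (w ++ [x]).head? = w.head? := by
  cases w with
  | nil => exact absurd rfl hw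
  | cons a t => simp

end CodeWordAux

namespace CodeWordAux

lemma isCodeWord_append_iff (w : List (Option ℕ)) (hw : w ≠ []) (x : Option ℕ) :
    IsCodeWord (w ++ [x]) ↔
      IsCodeWord w ∧ (x = none ∨ x = some (w.length + 1) ∨ x = w[w.length - 1]!) := by
  have hlen : 1 ≤ w.length := List.length_pos_iff.mpr hw
  constructor
  · rintro ⟨-, h2, h3⟩
    refine ⟨⟨hw, by rwa [head?_append' w hw] at h2, ?_⟩, ?_⟩
    · intro j hj2 hjle
      have := h3 j hj2 (by simp; omega)
      rwa [getE_append_lt w x (by omega), getE_append_lt w x (by omega)] at this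
    · have := h3 (w.length + 1) (by omega) (by simp)
      have e1 : w.length + 1 - 1 = w.length := by omega
      rw [e1, getE_append_last] at this
      rcases this with h | h | h
      · exact Or.inl h
      · exact Or.inr (Or.inl h)
      · refine Or.inr (Or.inr ?_)
        rwa [show w.length + 1 - 2 = w.length - 1 by omega,
          getE_append_lt w x (by omega)] at h
  · rintro ⟨⟨-, h2, h3⟩, hx⟩
    refine ⟨by simp, by rwa [head?_append' w hw], ?_⟩
    intro j hj2 hjle
    rcases lt_or_eq_of_le hjle with hlt | heq
    · have hjl : j ≤ w.length := by simp at hlt; omega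
      rw [getE_append_lt w x (by omega), getE_append_lt w x (by omega)]
      exact h3 j hj2 hjl
    · have hl2 : (w ++ [x]).length = w.length + 1 := by simp
      have e0 : j = w.length + 1 := by omega
      subst e0
      rw [show w.length + 1 - 1 = w.length from by omega, getE_append_last,
        show w.length + 1 - 2 = w.length - 1 by omega, getE_append_lt w x (by omega)]
      exact hx

def cw : ℕ → Finset (List (Option ℕ))
  | 0 => {[none]}
  | n + 1 =>
      (cw n).image (· ++ [none]) ∪
      (cw n).image (· ++ [some (n + 2)]) ∪
      ((cw n).filter (fun w => w[n]! ≠ none)).image (fun w => w ++ [w[n]!])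

lemma length_of_mem_cw : ∀ n, ∀ w ∈ cw n, w.length = n + 1 := by
  intro n
  induction n with
  | zero => intro w hw; simp [cw] at hw; subst hw; rfl
  | succ n ih =>
    intro w hw
    simp only [cw, Finset.mem_union, Finset.mem_image, Finset.mem_filter] at hw
    rcases hw with (⟨u, hu, rfl⟩ | ⟨u, hu, rfl⟩) | ⟨u, ⟨hu, -⟩, rfl⟩ <;>
      simp [ih u hu]

lemma bound_of_mem_cw : ∀ n, ∀ w ∈ cw n, ∀ m, w[n]! = some m → m ≤ n + 1 := by
  intro n
  induction n with
  | zero => intro w hw m hm; simp [cw] at hw; subst hw; simp at hm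
  | succ n ih =>
    intro w hw m hm
    simp only [cw, Finset.mem_union, Finset.mem_image, Finset.mem_filter] at hw
    rcases hw with (⟨u, hu, rfl⟩ | ⟨u, hu, rfl⟩) | ⟨u, ⟨hu, -⟩, rfl⟩ <;>
      have hl := length_of_mem_cw n u hu
    · rw [show n + 1 = u.length from by omega, getE_append_last] at hm
      simp at hm
    · rw [show n + 1 = u.length from by omega, getE_append_last] at hm
      simp at hm; omega
    · rw [show n + 1 = u.length from by omega, getE_append_last] at hm
      exact le_trans (ih u hu m hm) (by omega)

lemma mem_cw_iff : ∀ n w, w ∈ cw n ↔ w.length = n + 1 ∧ IsCodeWord w := by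
  intro n
  induction n with
  | zero =>
    intro w
    simp only [cw, Finset.mem_singleton]
    constructor
    · rintro rfl
      exact ⟨rfl, by simp, by simp, by intro j h1 h2; simp at h2; omega⟩
    · rintro ⟨hl, -, hh, -⟩
      obtain ⟨a, rfl⟩ := List.length_eq_one_iff.mp hl
      simp at hh
      rw [hh]
  | succ n ih =>
    intro w
    simp only [cw, Finset.mem_union, Finset.mem_image, Finset.mem_filter]
    constructor
    · rintro ((⟨u, hu, rfl⟩ | ⟨u, hu, rfl⟩) | ⟨u, ⟨hu, hne⟩, rfl⟩) <;>
        obtain ⟨hl, hcw⟩ := (ih u).mp hu <;>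
        have hu0 : u ≠ [] := by intro h; rw [h] at hl; simp at hl
      · exact ⟨by simp [hl], (isCodeWord_append_iff u hu0 none).mpr ⟨hcw, Or.inl rfl⟩⟩
      · exact ⟨by simp [hl], (isCodeWord_append_iff u hu0 _).mpr
          ⟨hcw, Or.inr (Or.inl (by rw [hl]))⟩⟩
      · refine ⟨by simp [hl], (isCodeWord_append_iff u hu0 _).mpr
          ⟨hcw, Or.inr (Or.inr ?_)⟩⟩
        rw [hl]
        simp
    · rintro ⟨hl, hcw⟩
      have hw0 : w ≠ [] := by intro h; rw [h] at hl; simp at hl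
      set u := w.dropLast with hu
      have hul : u.length = n + 1 := by simp [hu, hl]
      have hu0 : u ≠ [] := by intro h; rw [h] at hul; simp at hul
      have hsplit : w = u ++ [w.getLast hw0] := (List.dropLast_append_getLast hw0).symm
      rw [hsplit] at hcw
      obtain ⟨hcwu, hx⟩ := (isCodeWord_append_iff u hu0 _).mp hcw
      have humem : u ∈ cw n := (ih u).mpr ⟨hul, hcwu⟩
      have hun : u.length - 1 = n := by omega
      rcases hx with h | h | h
      · exact Or.inl (Or.inl ⟨u, humem, by rw [hsplit, h]⟩)
      · exact Or.inl (Or.inr ⟨u, humem, by rw [hsplit, h, hul]⟩)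
      · rw [hun] at h
        by_cases hnone : u[n]! = none
        · exact Or.inl (Or.inl ⟨u, humem, by rw [hsplit, h, hnone]⟩)
        · exact Or.inr ⟨u, ⟨humem, hnone⟩, by rw [hsplit, h]⟩

lemma getE_last_of_mem (n : ℕ) {w : List (Option ℕ)} (x : Option ℕ) (hw : w ∈ cw n) :
    (w ++ [x])[n + 1]! = x := by
  rw [show n + 1 = w.length from (length_of_mem_cw n w hw).symm, getE_append_last]

lemma card_cw_succ (n : ℕ) :
    (cw (n + 1)).card = 2 * (cw n).card + ((cw n).filter (fun w => w[n]! ≠ none)).card := by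
  have hinj1 : Function.Injective (fun w : List (Option ℕ) => w ++ [none]) := by
    intro a b h; simpa using h
  have hinj2 : Function.Injective (fun w : List (Option ℕ) => w ++ [some (n + 2)]) := by
    intro a b h; simpa using h
  have key1 : ∀ u ∈ (cw n).image (· ++ [none]), u[n + 1]! = none := by
    rintro u hu; obtain ⟨v, hv, rfl⟩ := Finset.mem_image.mp hu
    exact getE_last_of_mem n _ hv
  have key2 : ∀ u ∈ (cw n).image (· ++ [some (n + 2)]), u[n + 1]! = some (n + 2) := by
    rintro u hu; obtain ⟨v, hv, rfl⟩ := Finset.mem_image.mp hu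
    exact getE_last_of_mem n _ hv
  have key3 : ∀ u ∈ ((cw n).filter (fun w => w[n]! ≠ none)).image (fun w => w ++ [w[n]!]),
      u[n + 1]! ≠ none ∧ ∀ m, u[n + 1]! = some m → m ≤ n + 1 := by
    rintro u hu; obtain ⟨v, hv, rfl⟩ := Finset.mem_image.mp hu
    rw [Finset.mem_filter] at hv
    rw [getE_last_of_mem n _ hv.1]
    exact ⟨hv.2, fun m hm => bound_of_mem_cw n v hv.1 m hm⟩
  have d12 : Disjoint ((cw n).image (· ++ [none])) ((cw n).image (· ++ [some (n + 2)])) := by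
    rw [Finset.disjoint_left]
    intro u h1 h2
    have := key1 u h1; rw [key2 u h2] at this; simp at this
  have d13 : Disjoint ((cw n).image (· ++ [none]))
      (((cw n).filter (fun w => w[n]! ≠ none)).image (fun w => w ++ [w[n]!])) := by
    rw [Finset.disjoint_left]
    intro u h1 h2
    exact (key3 u h2).1 (key1 u h1)
  have d23 : Disjoint ((cw n).image (· ++ [some (n + 2)]))
      (((cw n).filter (fun w => w[n]! ≠ none)).image (fun w => w ++ [w[n]!])) := by
    rw [Finset.disjoint_left]
    intro u h1 h2
    have := (key3 u h2).2 (n + 2) (key2 u h1)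
    omega
  have hinj3 : Set.InjOn (fun w : List (Option ℕ) => w ++ [w[n]!])
      ((cw n).filter (fun w => w[n]! ≠ none)) := by
    intro a ha b hb h
    rw [Finset.coe_filter, Set.mem_setOf_eq] at ha hb
    have hla := length_of_mem_cw n a ha.1
    have hlb := length_of_mem_cw n b hb.1
    exact (List.append_inj h (by omega)).1
  rw [show cw (n + 1) = (cw n).image (· ++ [none]) ∪ (cw n).image (· ++ [some (n + 2)]) ∪
      ((cw n).filter (fun w => w[n]! ≠ none)).image (fun w => w ++ [w[n]!]) from rfl,
    Finset.card_union_of_disjoint (by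
      rw [Finset.disjoint_union_left]; exact ⟨d13, d23⟩),
    Finset.card_union_of_disjoint d12, Finset.card_image_of_injective _ hinj1,
    Finset.card_image_of_injective _ hinj2, Finset.card_image_of_injOn hinj3]
  ring

lemma filter_cw_succ (n : ℕ) :
    ((cw (n + 1)).filter (fun w => w[n + 1]! ≠ none)).card =
      (cw n).card + ((cw n).filter (fun w => w[n]! ≠ none)).card := by
  have e : cw (n + 1) = (cw n).image (· ++ [none]) ∪ (cw n).image (· ++ [some (n + 2)]) ∪
      ((cw n).filter (fun w => w[n]! ≠ none)).image (fun w => w ++ [w[n]!]) := rfl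
  rw [e, Finset.filter_union, Finset.filter_union]
  have f1 : ((cw n).image (· ++ [none])).filter (fun w => w[n + 1]! ≠ none) = ∅ := by
    rw [Finset.filter_eq_empty_iff]
    rintro u hu
    obtain ⟨v, hv, rfl⟩ := Finset.mem_image.mp hu
    simp only [ne_eq, not_not]
    exact getE_last_of_mem n _ hv
  have f2 : ((cw n).image (· ++ [some (n + 2)])).filter (fun w => w[n + 1]! ≠ none) =
      (cw n).image (· ++ [some (n + 2)]) := by
    rw [Finset.filter_eq_self]
    rintro u hu
    obtain ⟨v, hv, rfl⟩ := Finset.mem_image.mp hu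
    rw [getE_last_of_mem n _ hv]
    simp
  have f3 : (((cw n).filter (fun w => w[n]! ≠ none)).image
        (fun w => w ++ [w[n]!])).filter (fun w => w[n + 1]! ≠ none) =
      ((cw n).filter (fun w => w[n]! ≠ none)).image (fun w => w ++ [w[n]!]) := by
    rw [Finset.filter_eq_self]
    rintro u hu
    obtain ⟨v, hv, rfl⟩ := Finset.mem_image.mp hu
    rw [Finset.mem_filter] at hv
    rw [getE_last_of_mem n _ hv.1]
    exact hv.2
  rw [f1, f2, f3]
  have d23 : Disjoint ((cw n).image (· ++ [some (n + 2)]))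
      (((cw n).filter (fun w => w[n]! ≠ none)).image (fun w => w ++ [w[n]!])) := by
    rw [Finset.disjoint_left]
    intro u h1 h2
    obtain ⟨v, hv, rfl⟩ := Finset.mem_image.mp h1
    obtain ⟨v2, hv2, he⟩ := Finset.mem_image.mp h2
    rw [Finset.mem_filter] at hv2
    have e1 : (v ++ [some (n + 2)])[n + 1]! = some (n + 2) := getE_last_of_mem n _ hv
    rw [← he, getE_last_of_mem n _ hv2.1] at e1
    have := bound_of_mem_cw n v2 hv2.1 (n + 2) e1
    omega
  have hinj2 : Function.Injective (fun w : List (Option ℕ) => w ++ [some (n + 2)]) := by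
    intro a b h; simpa using h
  have hinj3 : Set.InjOn (fun w : List (Option ℕ) => w ++ [w[n]!])
      ((cw n).filter (fun w => w[n]! ≠ none)) := by
    intro a ha b hb h
    rw [Finset.coe_filter, Set.mem_setOf_eq] at ha hb
    have hla := length_of_mem_cw n a ha.1
    have hlb := length_of_mem_cw n b hb.1
    exact (List.append_inj h (by omega)).1
  rw [Finset.empty_union, Finset.card_union_of_disjoint d23,
    Finset.card_image_of_injective _ hinj2, Finset.card_image_of_injOn hinj3]

lemma card_cw_fib (n : ℕ) : (cw n).card = Nat.fib (2 * n + 1) ∧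
    ((cw n).filter (fun w => w[n]! ≠ none)).card = Nat.fib (2 * n) := by
  induction n with
  | zero =>
    constructor
    · simp [cw]
    · rw [show (2 : ℕ) * 0 = 0 from rfl, Nat.fib_zero, Finset.card_eq_zero,
        Finset.filter_eq_empty_iff]
      intro w hw
      simp only [cw, Finset.mem_singleton] at hw
      subst hw
      simp
  | succ n ih =>
    obtain ⟨h1, h2⟩ := ih
    have e1 : 2 * (n + 1) + 1 = 2 * n + 3 := by ring
    have e2 : 2 * (n + 1) = 2 * n + 2 := by ring
    constructor
    · rw [card_cw_succ, h1, h2, e1, Nat.fib_add_two, Nat.fib_add_two]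
      ring
    · rw [filter_cw_succ, h1, h2, e2, Nat.fib_add_two]
      ring

end CodeWordAux

theorem codeWord_count (k : ℕ) (hk : 1 ≤ k) :
    {w : List (Option ℕ) | w.length = k ∧ IsCodeWord w}.ncard = Nat.fib (2 * k - 1) := by
  obtain ⟨n, rfl⟩ : ∃ n, k = n + 1 := ⟨k - 1, by omega⟩
  have hset : {w : List (Option ℕ) | w.length = n + 1 ∧ IsCodeWord w} = ↑(CodeWordAux.cw n) := by
    ext w
    simp [CodeWordAux.mem_cw_iff, and_comm]
  rw [hset, Set.ncard_coe_finset, show 2 * (n + 1) - 1 = 2 * n + 1 by omega,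
    (CodeWordAux.card_cw_fib n).1]
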